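/- Let n be a natural number, let P be a finite type with Fintype.card P = n (the tiles of the board) and let D be a type with exactly 4 elements (the laser directions), so the laser state space S = P × D has cardinality 4n. Let f : S → Option S be any partial function that is injective where defined (whenever f a = some c and f b = some c, then a = b). If the initial laser state s is not in the image of f, then the trajectory of s under f terminates within at most 4n steps: there exists k ≤ 4 * n such that iterating the partial dynamics k times starting from s yields none. -/

import Mathlib

/-!
Iterating `o ↦ o.bind f` from `some s`, the defined states are pairwise distinct: by injectivity
a repetition `xᵢ = xᵢ₊d` can be pulled back to `x₀ = x_d`, i.e. `s` would have a predecessor.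
So at most `Fintype.card α` defined states occur before the trajectory reaches `none`.
-/

section PartialIteration

variable {α : Type*} {f : α → Option α}

theorem Option.eq_of_bind_eq_bind (hf : ∀ a b c, f a = some c → f b = some c → a = b)
    {o₁ o₂ : Option α} (h : o₁.bind f = o₂.bind f) (hne : o₁.bind f ≠ none) : o₁ = o₂ := by
  obtain ⟨c, hc⟩ := Option.ne_none_iff_exists'.mp hne
  obtain ⟨a, rfl, ha⟩ := Option.bind_eq_some_iff.mp hc
  obtain ⟨b, rfl, hb⟩ := Option.bind_eq_some_iff.mp (h ▸ hc)
  rw [hf a b c ha hb]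

theorem eq_iterate_bind_of_iterate_bind_eq (hf : ∀ a b c, f a = some c → f b = some c → a = b)
    (o : Option α) (d : ℕ) :
    ∀ i, (·.bind f)^[i] o = (·.bind f)^[i + d] o → (·.bind f)^[i] o ≠ none →
      o = (·.bind f)^[d] o
  | 0, h, _ => by simpa using h
  | i + 1, h, hne => by
    rw [Nat.add_right_comm, Function.iterate_succ_apply', Function.iterate_succ_apply'] at h
    rw [Function.iterate_succ_apply'] at hne
    refine eq_iterate_bind_of_iterate_bind_eq hf o d i
      (Option.eq_of_bind_eq_bind hf h hne) ?_
    rintro hnone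
    exact hne (by rw [hnone]; rfl)

theorem iterate_bind_ne_some_of_forall_ne {s : α} (hs : ∀ a, f a ≠ some s) {d : ℕ} (hd : 0 < d) :
    (·.bind f)^[d] (some s) ≠ some s := by
  obtain ⟨d, rfl⟩ := Nat.exists_eq_add_of_lt hd
  rw [Nat.zero_add, Function.iterate_succ_apply']
  intro h
  obtain ⟨a, -, ha⟩ := Option.bind_eq_some_iff.mp h
  exact hs a ha

theorem iterate_bind_ne_of_lt (hf : ∀ a b c, f a = some c → f b = some c → a = b) {s : α}
    (hs : ∀ a, f a ≠ some s) {i j : ℕ} (hij : i < j) (hne : (·.bind f)^[i] (some s) ≠ none) :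
    (·.bind f)^[i] (some s) ≠ (·.bind f)^[j] (some s) := by
  obtain ⟨d, rfl⟩ := Nat.exists_eq_add_of_lt hij
  intro h
  exact iterate_bind_ne_some_of_forall_ne hs d.succ_pos
    (eq_iterate_bind_of_iterate_bind_eq hf _ (d + 1) i h hne).symm

theorem exists_iterate_bind_eq_none [Fintype α]
    (hf : ∀ a b c, f a = some c → f b = some c → a = b) {s : α} (hs : ∀ a, f a ≠ some s) :
    ∃ k ≤ Fintype.card α, (·.bind f)^[k] (some s) = none := by
  by_contra! hdef
  let orbit : Fin (Fintype.card α + 1) → Option α := fun k => (·.bind f)^[k] (some s)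
  have horbit : Function.Injective orbit := by
    intro i j h
    by_contra hij
    rcases Fin.lt_or_lt_of_ne hij with hlt | hlt
    · exact iterate_bind_ne_of_lt hf hs hlt (hdef i (Nat.lt_succ_iff.mp i.isLt)) h
    · exact iterate_bind_ne_of_lt hf hs hlt (hdef j (Nat.lt_succ_iff.mp j.isLt)) h.symm
  have hnone : none ∉ Set.range orbit := by
    rintro ⟨k, hk⟩
    exact hdef k (Nat.lt_succ_iff.mp k.isLt) hk
  simpa using Fintype.card_lt_of_injective_of_notMem orbit horbit hnone

end PartialIteration

/-- Quantitative form of Lemma 1: on a board with `n` tiles and 4 laser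
directions, a time-reversible laser dynamics started from a state with no
predecessor terminates within `4 * n` steps. -/
theorem lasertank_laser_terminates_4n (n : ℕ) (P D : Type*) [Fintype P] [Fintype D]
    (hP : Fintype.card P = n) (hD : Fintype.card D = 4)
    (f : P × D → Option (P × D))
    (hinj : ∀ a b c : P × D, f a = some c → f b = some c → a = b)
    (s : P × D) (hs : ∀ a : P × D, f a ≠ some s) :
    ∃ k ≤ 4 * n, (fun o : Option (P × D) => o.bind f)^[k] (some s) = none := by
  have hcard : Fintype.card (P × D) = 4 * n := by
    rw [Fintype.card_prod, hP, hD, mul_comm]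
  simpa only [hcard] using exists_iterate_bind_eq_none hinj hs
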